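/- Suppose X is a Markov chain on ℝ₊ with E|r(X̃_j(x)) − r(X̃_{j+1}(x))|² ≤ c ρ^j E|X₁(x) − x|² for all j, and r(X̃_j(x)) → r(X̃_∞(x)) in L² where r(X̃_∞(x)) has law π∘r⁻¹. Then |E_x r_c(X_n)| ≤ c^{1/2} (ρ^{1/2})^n/(1 − ρ^{1/2}) · E^{1/2}|X₁(x) − x|², and in particular Σ_{n=0}^∞ |E_x r_c(X_n)| < ∞. -/

import Mathlib

open MeasureTheory ProbabilityTheory NNReal Filter Topology

/-!
The means `a j = E r(X̃_j(x))` satisfy `|a j − a (j+1)| ≤ E^{1/2}|r(X̃_j) − r(X̃_{j+1})|²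
≤ √c (√ρ)^j E^{1/2}|X₁(x) − x|²` by Cauchy–Schwarz, and `a j → E r(X̃_∞) = ∫ r dπ` because
`L²` convergence implies convergence of means and `r(X̃_∞)` has law `π ∘ r⁻¹`. Summing the
geometric tail of the increments bounds `|a n − ∫ r dπ|`, which is then summable in `n`.
-/

section SquareIntegrable

variable {Ω : Type*} [MeasurableSpace Ω] {P : Measure Ω} [IsProbabilityMeasure P]

lemma abs_integral_le_sqrt_integral_sq {f : Ω → ℝ} (hf : MemLp f 2 P) :
    |∫ ω, f ω ∂P| ≤ √(∫ ω, f ω ^ 2 ∂P) := by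
  have hvar := variance_nonneg f P
  rw [variance_eq_sub hf] at hvar
  have hsq : (∫ ω, f ω ∂P) ^ 2 ≤ ∫ ω, f ω ^ 2 ∂P := by
    simpa only [Pi.pow_apply, sub_nonneg] using hvar
  rw [← Real.sqrt_sq_eq_abs]
  exact Real.sqrt_le_sqrt hsq

lemma abs_integral_sub_integral_le_sqrt {f g : Ω → ℝ} (hf : MemLp f 2 P) (hg : MemLp g 2 P) :
    |∫ ω, f ω ∂P - ∫ ω, g ω ∂P| ≤ √(∫ ω, (f ω - g ω) ^ 2 ∂P) := by
  rw [← integral_sub (hf.integrable one_le_two) (hg.integrable one_le_two)]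
  exact abs_integral_le_sqrt_integral_sq (hf.sub hg)

lemma tendsto_integral_of_tendsto_integral_sq_sub {ι : Type*} {l : Filter ι} {f : ι → Ω → ℝ}
    {g : Ω → ℝ} (hf : ∀ i, MemLp (f i) 2 P) (hg : MemLp g 2 P)
    (hfg : Tendsto (fun i => ∫ ω, (f i ω - g ω) ^ 2 ∂P) l (𝓝 0)) :
    Tendsto (fun i => ∫ ω, f i ω ∂P) l (𝓝 (∫ ω, g ω ∂P)) := by
  rw [tendsto_iff_dist_tendsto_zero]
  have hsqrt := hfg.sqrt
  rw [Real.sqrt_zero] at hsqrt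
  exact squeeze_zero (fun _ => dist_nonneg)
    (fun i => abs_integral_sub_integral_le_sqrt (hf i) hg) hsqrt

end SquareIntegrable

lemma Real.sqrt_pow {x : ℝ} (hx : 0 ≤ x) (n : ℕ) : √(x ^ n) = √x ^ n := by
  rw [Real.sqrt_eq_iff_mul_self_eq (pow_nonneg hx n) (by positivity), ← mul_pow,
    Real.mul_self_sqrt hx]

theorem stmt_14_general {Ω : Type*} [MeasurableSpace Ω] (P : Measure Ω) [IsProbabilityMeasure P]
    (bwd : ℕ → Ω → ℝ≥0 → ℝ≥0) (x : ℝ≥0)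
    (hbwdmeas : ∀ n, Measurable (fun ω => bwd n ω x))
    (ρ c : ℝ) (hρ0 : 0 < ρ) (hρ1 : ρ < 1)
    (r : ℝ≥0 → ℝ) (hrmeas : Measurable r)
    (π : Measure ℝ≥0) [IsProbabilityMeasure π]
    (hL2 : ∀ j, Integrable (fun ω => (r (bwd j ω x)) ^ 2) P)
    (hbound : ∀ j : ℕ,
      ∫ ω, (r (bwd j ω x) - r (bwd (j + 1) ω x)) ^ 2 ∂P
        ≤ c * ρ ^ j * ∫ ω, ((bwd 1 ω x : ℝ) - (x : ℝ)) ^ 2 ∂P)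
    (Y : Ω → ℝ) (hYmeas : Measurable Y) (hYL2 : Integrable (fun ω => (Y ω) ^ 2) P)
    (hconv : Tendsto (fun j => ∫ ω, (r (bwd j ω x) - Y ω) ^ 2 ∂P) atTop (nhds 0))
    (hYlaw : Measure.map Y P = Measure.map r π) :
    (∀ n : ℕ, |(∫ ω, r (bwd n ω x) ∂P) - ∫ w, r w ∂π|
        ≤ Real.sqrt c * (Real.sqrt ρ) ^ n / (1 - Real.sqrt ρ)
            * Real.sqrt (∫ ω, ((bwd 1 ω x : ℝ) - (x : ℝ)) ^ 2 ∂P)) ∧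
    Summable (fun n : ℕ => |(∫ ω, r (bwd n ω x) ∂P) - ∫ w, r w ∂π|) := by
  set M := ∫ ω, ((bwd 1 ω x : ℝ) - (x : ℝ)) ^ 2 ∂P
  set a : ℕ → ℝ := fun j => ∫ ω, r (bwd j ω x) ∂P
  have hrL2 j : MemLp (fun ω => r (bwd j ω x)) 2 P :=
    (memLp_two_iff_integrable_sq (hrmeas.comp (hbwdmeas j)).aestronglyMeasurable).mpr (hL2 j)
  have hYL2' : MemLp Y 2 P := (memLp_two_iff_integrable_sq hYmeas.aestronglyMeasurable).mpr hYL2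
  have hlimit : Tendsto a atTop (𝓝 (∫ w, r w ∂π)) := by
    rw [← (IdentDistrib.mk hYmeas.aemeasurable hrmeas.aemeasurable hYlaw).integral_eq]
    exact tendsto_integral_of_tendsto_integral_sq_sub hrL2 hYL2' hconv
  have hstep j : dist (a j) (a (j + 1)) ≤ √c * √M * √ρ ^ j :=
    calc |a j - a (j + 1)| ≤ √(c * ρ ^ j * M) :=
          (abs_integral_sub_integral_le_sqrt (hrL2 j) (hrL2 (j + 1))).trans
            (Real.sqrt_le_sqrt (hbound j))
      _ = √c * √M * √ρ ^ j := by
          rw [Real.sqrt_mul' _ (integral_nonneg fun _ => sq_nonneg _),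
            Real.sqrt_mul' _ (pow_nonneg hρ0.le j), Real.sqrt_pow hρ0.le]
          ring
  have hsqrtρ : √ρ < 1 := by rwa [Real.sqrt_lt' one_pos, one_pow]
  have htail n : |a n - ∫ w, r w ∂π| ≤ √c * √ρ ^ n / (1 - √ρ) * √M := by
    have := dist_le_of_le_geometric_of_tendsto _ _ hsqrtρ hstep hlimit n
    rw [Real.dist_eq] at this
    exact this.trans_eq (by ring)
  refine ⟨htail, Summable.of_nonneg_of_le (fun _ => abs_nonneg _) htail ?_⟩
  simpa only [mul_div_right_comm, mul_right_comm _ (√ρ ^ _)] using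
    (summable_geometric_of_lt_one (Real.sqrt_nonneg ρ) hsqrtρ).mul_left (√c / (1 - √ρ) * √M)

/-- If `E|r(X̃_j(x)) − r(X̃_{j+1}(x))|² ≤ c ρ^j E|X₁(x) − x|²` for all `j`, and
`r(X̃_j(x)) → r(X̃_∞(x))` in `L²` where the limit has law `π ∘ r⁻¹`, then
`|E_x r_c(X_n)| ≤ c^{1/2} (ρ^{1/2})^n / (1 − ρ^{1/2}) · E^{1/2}|X₁(x) − x|²`, and
in particular `Σ_n |E_x r_c(X_n)| < ∞`.  (The backward iterates `X̃_j(x)` have the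
same marginal law as `X_j` under `P_x`, so `E_x r_c(X_n) = E r(X̃_n(x)) − πr`.) -/
theorem stmt_14 {Ω : Type*} [MeasurableSpace Ω] (P : Measure Ω) [IsProbabilityMeasure P]
    (bwd : ℕ → Ω → ℝ≥0 → ℝ≥0) (x : ℝ≥0)
    (hbwdmeas : ∀ n, Measurable (fun ω => bwd n ω x))
    (ρ c : ℝ) (hρ0 : 0 < ρ) (hρ1 : ρ < 1) (hc : 0 ≤ c)
    (r : ℝ≥0 → ℝ) (hrmeas : Measurable r)
    (π : Measure ℝ≥0) [IsProbabilityMeasure π] (hrπ : Integrable r π)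
    (hL2 : ∀ j, Integrable (fun ω => (r (bwd j ω x)) ^ 2) P)
    (hbound : ∀ j : ℕ,
      ∫ ω, (r (bwd j ω x) - r (bwd (j + 1) ω x)) ^ 2 ∂P
        ≤ c * ρ ^ j * ∫ ω, ((bwd 1 ω x : ℝ) - (x : ℝ)) ^ 2 ∂P)
    (Y : Ω → ℝ) (hYmeas : Measurable Y) (hYL2 : Integrable (fun ω => (Y ω) ^ 2) P)
    (hconv : Tendsto (fun j => ∫ ω, (r (bwd j ω x) - Y ω) ^ 2 ∂P) atTop (nhds 0))
    (hYlaw : Measure.map Y P = Measure.map r π) :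
    (∀ n : ℕ, |(∫ ω, r (bwd n ω x) ∂P) - ∫ w, r w ∂π|
        ≤ Real.sqrt c * (Real.sqrt ρ) ^ n / (1 - Real.sqrt ρ)
            * Real.sqrt (∫ ω, ((bwd 1 ω x : ℝ) - (x : ℝ)) ^ 2 ∂P)) ∧
    Summable (fun n : ℕ => |(∫ ω, r (bwd n ω x) ∂P) - ∫ w, r w ∂π|) :=
  stmt_14_general P bwd x hbwdmeas ρ c hρ0 hρ1 r hrmeas π hL2 hbound Y hYmeas hYL2 hconv hYlaw
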